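/- arXiv:1603.04245 — 9 statements merged into one kernel-verified Lean document; each statement's English description precedes it below -/
import Mathlib

section
/- Let E be a real inner product space, f, h : E → ℝ differentiable, x* ∈ E, and α, β : ℝ → ℝ with β differentiable. Suppose X, V, W : ℝ → E and t ∈ ℝ are such that X has derivative V t at t, the curve s ↦ X s + exp(−α s) • V s has derivative W t at t, and the curve s ↦ ∇h(X s + exp(−α s) • V s) has derivative −exp(α t + β t) • ∇f(X t) at t. Then the energy functional E(s) = D_h(x*, X s + exp(−α s) • V s) + exp(β s) * (f (X s) − f x*) has derivative at t equal to −exp(α t + β t) * D_f(x*, X t) + (deriv β t − exp(α t)) * exp(β t) * (f (X t) − f x*), where D_f is the Bregman divergence of f. -/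
open Real
open scoped RealInnerProductSpace

/-! The derivative of `s ↦ D_h(x*, Z s)` is `-⟪(∇h ∘ Z)', x* - Z⟫`: the two terms containing `Z'`
cancel. Along the Euler–Lagrange flow `(∇h ∘ Z)' = -e^{α+β} ∇f(X)` and `Z = X + e^{-α} V` with
`V = X'`, so this contributes `e^{α+β}⟪∇f(X), x* - X⟫ - e^β ⟪∇f(X), V⟫`; the last term cancels
against the derivative of `e^β (f ∘ X)`, and what remains regroups into the Bregman divergence of `f`. -/

section

variable {E : Type*} [NormedAddCommGroup E] [InnerProductSpace ℝ E] [CompleteSpace E]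

noncomputable def bregmanDiv (h : E → ℝ) (y x : E) : ℝ :=
  h y - h x - ⟪gradient h x, y - x⟫

theorem HasGradientAt.comp_hasDerivAt {h : E → ℝ} {g : E} {Z : ℝ → E} {W : E} {t : ℝ}
    (hh : HasGradientAt h g (Z t)) (hZ : HasDerivAt Z W t) :
    HasDerivAt (fun s => h (Z s)) ⟪g, W⟫ t := by
  simpa [Function.comp_def] using hh.hasFDerivAt.comp_hasDerivAt t hZ

theorem hasDerivAt_bregmanDiv_right {h : E → ℝ} (y : E) {Z : ℝ → E} {W G : E} {t : ℝ}
    (hh : DifferentiableAt ℝ h (Z t)) (hZ : HasDerivAt Z W t)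
    (hG : HasDerivAt (fun s => gradient h (Z s)) G t) :
    HasDerivAt (fun s => bregmanDiv h y (Z s)) (-⟪G, y - Z t⟫) t := by
  have hD := ((hh.hasGradientAt.comp_hasDerivAt hZ).const_sub (h y)).sub
    (hG.inner ℝ (hZ.const_sub y))
  refine hD.congr_deriv ?_
  simp only [inner_neg_right]
  ring

theorem hasDerivAt_exp_mul_sub {f : E → ℝ} {β : ℝ → ℝ} {X : ℝ → E} {V : E} (y : E) {t : ℝ}
    (hf : DifferentiableAt ℝ f (X t)) (hβ : DifferentiableAt ℝ β t) (hX : HasDerivAt X V t) :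
    HasDerivAt (fun s => exp (β s) * (f (X s) - f y))
      (exp (β t) * deriv β t * (f (X t) - f y) + exp (β t) * ⟪gradient f (X t), V⟫) t :=
  hβ.hasDerivAt.exp.mul ((hf.hasGradientAt.comp_hasDerivAt hX).sub_const (f y))

end

/-- Time derivative of the energy functional
`E(s) = D_h(x*, X s + e^{−α s} V s) + e^{β s}(f (X s) − f x*)` along a solution of the
Euler–Lagrange equation of the Bregman Lagrangian (computation in the proof of Theorem 1). -/
theorem energy_functional_deriv
    {E : Type*} [NormedAddCommGroup E] [InnerProductSpace ℝ E] [CompleteSpace E]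
    (f h : E → ℝ) (hf : Differentiable ℝ f) (hh : Differentiable ℝ h)
    (xstar : E) (α β : ℝ → ℝ) (hβ : Differentiable ℝ β)
    (X V W : ℝ → E) (t : ℝ)
    (hX : HasDerivAt X (V t) t)
    (hZ : HasDerivAt (fun s => X s + Real.exp (-(α s)) • V s) (W t) t)
    (hEL : HasDerivAt (fun s => gradient h (X s + Real.exp (-(α s)) • V s))
      (-(Real.exp (α t + β t)) • gradient f (X t)) t) :
    HasDerivAt
      (fun s =>
        (h xstar - h (X s + Real.exp (-(α s)) • V s)
          - ⟪gradient h (X s + Real.exp (-(α s)) • V s),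
              xstar - (X s + Real.exp (-(α s)) • V s)⟫)
        + Real.exp (β s) * (f (X s) - f xstar))
      (-(Real.exp (α t + β t)) *
          (f xstar - f (X t) - ⟪gradient f (X t), xstar - X t⟫)
        + (deriv β t - Real.exp (α t)) * Real.exp (β t) * (f (X t) - f xstar)) t := by
  have hD := hasDerivAt_bregmanDiv_right xstar (hh _) hZ hEL
  have hP := hasDerivAt_exp_mul_sub xstar (hf (X t)) (hβ t) hX
  refine (hD.add hP).congr_deriv ?_
  simp only [inner_sub_right, inner_add_right, real_inner_smul_left,
    real_inner_smul_right, exp_add, exp_neg]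
  field_simp
  ring
end

section
/- Let E be a real inner product space, f, h : E → ℝ differentiable, α, β : ℝ → ℝ, and let τ : ℝ → ℝ be differentiable with deriv τ t > 0 for all t. Suppose X, V : ℝ → E satisfy, for every s: X has derivative V s at s, and the curve u ↦ ∇h(X u + exp(−α u) • V u) has derivative −exp(α s + β s) • ∇f(X s) at s. Define the modified parameters α̃ t = α(τ t) + log(deriv τ t) and β̃ t = β(τ t), and the reparameterized curve Y t = X(τ t) with velocity W t = (deriv τ t) • V(τ t). Then for every t: Y has derivative W t at t, and the curve u ↦ ∇h(Y u + exp(−α̃ u) • W u) has derivative −exp(α̃ t + β̃ t) • ∇f(Y t) at t. (Time dilation: the sped-up curve satisfies the Euler–Lagrange equation with modified parameters.) -/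
open Real
open scoped RealInnerProductSpace

/-- Time dilation (Theorem 2 of the paper): if `X` solves the
Euler–Lagrange equation of the Bregman Lagrangian with parameters `α, β` (under ideal
scaling), then the reparameterized curve `Y t = X (τ t)` solves the Euler–Lagrange
equation with the modified parameters `α̃ t = α (τ t) + log (deriv τ t)`,
`β̃ t = β (τ t)`. -/
theorem bregman_lagrangian_time_dilation
    {E : Type*} [NormedAddCommGroup E] [InnerProductSpace ℝ E] [CompleteSpace E]
    (f h : E → ℝ) (hf : Differentiable ℝ f) (hh : Differentiable ℝ h)
    (α β : ℝ → ℝ) (τ : ℝ → ℝ) (hτ : Differentiable ℝ τ) (hτ' : ∀ t, 0 < deriv τ t)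
    (X V : ℝ → E)
    (hX : ∀ s, HasDerivAt X (V s) s)
    (hEL : ∀ s, HasDerivAt (fun u => gradient h (X u + Real.exp (-(α u)) • V u))
      (-(Real.exp (α s + β s)) • gradient f (X s)) s) :
    ∀ t,
      HasDerivAt (fun u => X (τ u)) (deriv τ t • V (τ t)) t ∧
      HasDerivAt
        (fun u => gradient h (X (τ u) +
          Real.exp (-((α (τ u) + Real.log (deriv τ u)))) • (deriv τ u • V (τ u))))
        (-(Real.exp ((α (τ t) + Real.log (deriv τ t)) + β (τ t))) • gradient f (X (τ t)))
        t := by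
  intro t
  have hτt : HasDerivAt τ (deriv τ t) t := (hτ t).hasDerivAt
  refine ⟨(hX (τ t)).scomp t hτt, ?_⟩
  have hfun : (fun u => gradient h (X (τ u) +
      Real.exp (-((α (τ u) + Real.log (deriv τ u)))) • (deriv τ u • V (τ u))))
      = fun u => gradient h (X (τ u) + Real.exp (-(α (τ u))) • V (τ u)) := by
    funext u
    congr 2
    rw [smul_smul, neg_add, Real.exp_add, Real.exp_neg (Real.log (deriv τ u)),
      Real.exp_log (hτ' u), Real.exp_neg]
    rw [mul_assoc, inv_mul_cancel₀ (hτ' u).ne', mul_one]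
  rw [hfun]
  have := ((hEL (τ t)).scomp t hτt)
  have heq : deriv τ t • (-(Real.exp (α (τ t) + β (τ t))) • gradient f (X (τ t)))
      = -(Real.exp ((α (τ t) + Real.log (deriv τ t)) + β (τ t))) • gradient f (X (τ t)) := by
    rw [smul_smul]
    congr 1
    rw [Real.exp_add, Real.exp_add, Real.exp_add, Real.exp_log (hτ' t)]
    ring
  rw [heq] at this
  exact this
end

section
/- Let E be a real inner product space, h, f : E → ℝ with h differentiable, and α, β, γ : ℝ → ℝ. Define the Bregman Lagrangian L_{α,β,γ}(x, v, t) = exp(α t + γ t) * (D_h(x + exp(−α t) • v, x) − exp(β t) * f(x)). Let τ : ℝ → ℝ be differentiable with deriv τ t > 0, and define α̃ t = α(τ t) + log(deriv τ t), β̃ t = β(τ t), γ̃ t = γ(τ t). Then for all x, v ∈ E and t ∈ ℝ: L_{α̃,β̃,γ̃}(x, v, t) = (deriv τ t) * L_{α,β,γ}(x, (deriv τ t)⁻¹ • v, τ t). -/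
open Real
open scoped RealInnerProductSpace

/-- The Bregman Lagrangian
`L_{α,β,γ}(x, v, t) = e^{α t + γ t} (D_h(x + e^{−α t} v, x) − e^{β t} f x)`,
where `D_h(y, x) = h y − h x − ⟪∇h x, y − x⟫` is the Bregman divergence of `h`. -/
noncomputable def bregmanLagrangian
    {E : Type*} [NormedAddCommGroup E] [InnerProductSpace ℝ E] [CompleteSpace E]
    (h f : E → ℝ) (α β γ : ℝ → ℝ) (x v : E) (t : ℝ) : ℝ :=
  Real.exp (α t + γ t) *
    ((h (x + Real.exp (-(α t)) • v) - h x
        - ⟪gradient h x, (x + Real.exp (-(α t)) • v) - x⟫)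
      - Real.exp (β t) * f x)

/-- Time-dilation identity for the Bregman Lagrangian (equation (9)
of the paper): `L_{α̃,β̃,γ̃}(x, v, t) = τ̇(t) L_{α,β,γ}(x, τ̇(t)⁻¹ v, τ(t))` with the
modified parameters `α̃ t = α(τ t) + log(τ̇ t)`, `β̃ t = β(τ t)`, `γ̃ t = γ(τ t)`. -/
theorem bregmanLagrangian_time_dilation
    {E : Type*} [NormedAddCommGroup E] [InnerProductSpace ℝ E] [CompleteSpace E]
    (h f : E → ℝ) (α β γ : ℝ → ℝ)
    (τ : ℝ → ℝ) (hτ : Differentiable ℝ τ) (hτ' : ∀ t, 0 < deriv τ t) :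
    ∀ (x v : E) (t : ℝ),
      bregmanLagrangian h f
        (fun t => α (τ t) + Real.log (deriv τ t))
        (fun t => β (τ t)) (fun t => γ (τ t)) x v t
      = deriv τ t * bregmanLagrangian h f α β γ x ((deriv τ t)⁻¹ • v) (τ t) := by
  intro x v t
  have hpos := hτ' t
  have hne : deriv τ t ≠ 0 := ne_of_gt hpos
  unfold bregmanLagrangian
  have h1 : Real.exp (-(α (τ t) + Real.log (deriv τ t))) • v
      = Real.exp (-(α (τ t))) • (deriv τ t)⁻¹ • v := by
    rw [smul_smul, neg_add, Real.exp_add]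
    rw [Real.exp_neg (Real.log _), Real.exp_log hpos]
  have h2 : Real.exp (α (τ t) + Real.log (deriv τ t) + γ (τ t))
      = deriv τ t * Real.exp (α (τ t) + γ (τ t)) := by
    rw [show α (τ t) + Real.log (deriv τ t) + γ (τ t)
        = Real.log (deriv τ t) + (α (τ t) + γ (τ t)) by ring,
      Real.exp_add, Real.exp_log hpos]
  rw [h1, h2]; ring
end

section
/- Let E be a real inner product space, p ≥ 2 an integer, ε > 0, M > 0, and 0 < C ≤ M^{p−1} / p^p. Let f, h : E → ℝ be differentiable with f convex, let x* satisfy f(x*) ≤ f(x) for all x, and assume h is 1-uniformly convex of order p. Let x, y, z : ℕ → E satisfy z 0 = x 0 and, for all k ≥ 0: x(k+1) = (p/(k+p)) • z k + (k/(k+p)) • y k; ∇h(z(k+1)) = ∇h(z k) − (ε C p (k+1)^{(p−1)}) • ∇f(y(k+1)); and ⟨∇f(y k), x k − y k⟩ ≥ M ε^{1/(p−1)} ‖∇f(y k)‖^{p/(p−1)}. Then for all k ≥ 1: f(y k) − f(x*) ≤ D_h(x*, x 0) / (C ε k^{(p)}). -/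
open Real
open scoped RealInnerProductSpace

/-- The rising factorial `k^{(q)} = k (k+1) ⋯ (k+q−1)`. -/
def risingFactorial (k q : ℕ) : ℕ := ∏ i ∈ Finset.range q, (k + i)

/-!
The Lyapunov function `E k = A k * (f (y k) - f x*) + D_h(x*, z k)` with `A k = C ε k^{(p)}` is
nonincreasing. Since `A (k+1) - A k = ε C p (k+1)^{(p-1)}` is exactly the mirror step size, the
three-point identity for `D_h` and convexity of `f` bound `E (k+1) - E k` by an error term
coupling the gradient condition on `y` with the mirror step. That term is nonpositive by Young's
inequality for the conjugate exponents `p` and `p / (p - 1)`, played against the `p`-uniform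
convexity of `h`; the constraint `C ≤ M^{p-1} / p^p` is what makes the constants match. As
`A 0 = 0` and `z 0 = x 0`, `E k ≤ D_h(x*, x 0)`.
-/
theorem risingFactorial_eq_ascFactorial (k q : ℕ) : risingFactorial k q = k.ascFactorial q :=
  (Nat.ascFactorial_eq_prod_range k q).symm

theorem rpow_one_add_inv_le_mul {a b : ℝ} {n : ℕ} (hn : n ≠ 0) (ha : 0 ≤ a) (hb : 0 ≤ b)
    (hab : a ≤ b ^ n) : a ^ (1 + (n : ℝ)⁻¹) ≤ a * b := by
  rw [rpow_add' ha (by positivity), rpow_one]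
  gcongr
  calc a ^ (n : ℝ)⁻¹ ≤ (b ^ n) ^ (n : ℝ)⁻¹ := by gcongr
    _ = b := pow_rpow_inv_natCast hb hn

/-- With `p = n + 1`, step size `τ = ε C p R` and weight `A' = C ε R K`, this reads
`τ ^ (p / (p - 1)) ≤ A' M ε ^ (1 / (p - 1))`. -/
theorem step_weight_rpow_le {n : ℕ} (hn : n ≠ 0) {ε C M R K : ℝ} (hε : 0 ≤ ε) (hC : 0 ≤ C)
    (hM : 0 ≤ M) (hR : 0 ≤ R) (hK : 0 ≤ K) (hCM : C ≤ M ^ n / (n + 1) ^ (n + 1))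
    (hRK : R ≤ K ^ n) :
    (ε * C * (n + 1) * R) ^ (1 + (n : ℝ)⁻¹) ≤ C * ε * R * K * (M * ε ^ (n : ℝ)⁻¹) := by
  have hCM' : C * (n + 1) ≤ (M / (n + 1)) ^ n := by
    rw [div_pow, le_div_iff₀ (by positivity)]
    rw [le_div_iff₀ (by positivity), pow_succ] at hCM
    linarith
  rw [show ε * C * (n + 1) * R = ε * (C * (n + 1)) * R by ring,
    mul_rpow (by positivity) hR, mul_rpow hε (by positivity),
    rpow_add' hε (by positivity), rpow_one]
  calc ε * ε ^ (n : ℝ)⁻¹ * (C * (n + 1)) ^ (1 + (n : ℝ)⁻¹) * R ^ (1 + (n : ℝ)⁻¹)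
      ≤ ε * ε ^ (n : ℝ)⁻¹ * (C * (n + 1) * (M / (n + 1))) * (R * K) := by
        gcongr
        · exact rpow_one_add_inv_le_mul hn (by positivity) (by positivity) hCM'
        · exact rpow_one_add_inv_le_mul hn hR hK hRK
    _ = C * ε * R * K * (M * ε ^ (n : ℝ)⁻¹) := by field_simp

section InnerProductSpace

variable {E : Type*} [NormedAddCommGroup E] [InnerProductSpace ℝ E]

theorem coupling_error_nonpos {p q : ℝ} (hpq : p.HolderConjugate q) {A τ L d : ℝ} (hA : 0 ≤ A)
    (hτ : 0 ≤ τ) (hτL : τ ^ q ≤ A * L) {g u v : E} (hu : L * ‖g‖ ^ q ≤ ⟪g, u⟫)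
    (hd : ‖v‖ ^ p / p ≤ d) :
    τ * ⟪g, v⟫ - A * ⟪g, u⟫ - d ≤ 0 := by
  have hyoung : τ * ⟪g, v⟫ ≤ (τ * ‖g‖) ^ q / q + ‖v‖ ^ p / p :=
    calc τ * ⟪g, v⟫ ≤ (τ * ‖g‖) * ‖v‖ := by
          rw [mul_assoc]; exact mul_le_mul_of_nonneg_left (real_inner_le_norm g v) hτ
      _ ≤ (τ * ‖g‖) ^ q / q + ‖v‖ ^ p / p :=
          young_inequality_of_nonneg (by positivity) (norm_nonneg v) hpq.symm
  have hconj : (τ * ‖g‖) ^ q / q ≤ A * (L * ‖g‖ ^ q) :=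
    calc (τ * ‖g‖) ^ q / q ≤ τ ^ q * ‖g‖ ^ q := by
          rw [mul_rpow hτ (norm_nonneg g)]
          exact div_le_self (by positivity) hpq.symm.lt.le
      _ ≤ A * L * ‖g‖ ^ q := by gcongr
      _ = A * (L * ‖g‖ ^ q) := by ring
  linarith [mul_le_mul_of_nonneg_left hu hA]

variable [CompleteSpace E]

noncomputable def bregman (h : E → ℝ) (a b : E) : ℝ := h a - h b - ⟪gradient h b, a - b⟫

theorem bregman_three_point (h : E → ℝ) (a b c : E) :
    bregman h a c = bregman h a b - bregman h c b + ⟪gradient h b - gradient h c, a - c⟫ := by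
  simp only [bregman, inner_sub_left, inner_sub_right]
  ring

theorem lyapunov_step_le {f h : E → ℝ} (hfconv : ∀ a b : E, f a + ⟪gradient f a, b - a⟫ ≤ f b)
    (xstar : E) {A τ : ℝ} (hA : 0 ≤ A) (hτ : 0 ≤ τ) {x' y y' z z' : E}
    (hcouple : (A + τ) • x' = τ • z + A • y)
    (hmirror : gradient h z - gradient h z' = τ • gradient f y') :
    (A + τ) * (f y' - f xstar) + bregman h xstar z' ≤
      A * (f y - f xstar) + bregman h xstar z +
        (τ * ⟪gradient f y', z - z'⟫ - (A + τ) * ⟪gradient f y', x' - y'⟫ - bregman h z' z) := by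
  set g := gradient f y'
  have hthree := bregman_three_point h xstar z z'
  rw [hmirror, real_inner_smul_left] at hthree
  have hcvx_star := mul_le_mul_of_nonneg_left (hfconv y' xstar) hτ
  have hcvx_prev := mul_le_mul_of_nonneg_left (hfconv y' y) hA
  have hcouple_g : (A + τ) * ⟪g, x'⟫ = τ * ⟪g, z⟫ + A * ⟪g, y⟫ := by
    rw [← real_inner_smul_right, hcouple, inner_add_right, real_inner_smul_right,
      real_inner_smul_right]
  simp only [inner_sub_right] at hthree hcvx_star hcvx_prev ⊢
  linear_combination hthree + hcvx_star + hcvx_prev + hcouple_g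

end InnerProductSpace

theorem accelerated_lyapunov_succ_le
    {E : Type*} [NormedAddCommGroup E] [InnerProductSpace ℝ E] [CompleteSpace E]
    (p : ℕ) (hp : 2 ≤ p) (ε M C : ℝ) (hε : 0 < ε) (hM : 0 < M)
    (hC : 0 < C) (hC' : C ≤ M ^ (p - 1) / (p : ℝ) ^ p)
    (f h : E → ℝ) (hfconv : ∀ a b : E, f a + ⟪gradient f a, b - a⟫ ≤ f b) (xstar : E)
    (hhuc : ∀ a b : E, (1 / (p : ℝ)) * ‖b - a‖ ^ p ≤ h b - h a - ⟪gradient h a, b - a⟫)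
    (x y z : ℕ → E)
    (hx : ∀ k : ℕ, x (k + 1) =
      ((p : ℝ) / ((k : ℝ) + (p : ℝ))) • z k + ((k : ℝ) / ((k : ℝ) + (p : ℝ))) • y k)
    (hz : ∀ k : ℕ, gradient h (z (k + 1)) = gradient h (z k)
      - (ε * C * (p : ℝ) * (risingFactorial (k + 1) (p - 1) : ℝ)) • gradient f (y (k + 1)))
    (hy : ∀ k : ℕ, M * ε ^ (1 / ((p : ℝ) - 1)) *
        ‖gradient f (y k)‖ ^ ((p : ℝ) / ((p : ℝ) - 1))
      ≤ ⟪gradient f (y k), x k - y k⟫) (k : ℕ) :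
    C * ε * (risingFactorial (k + 1) p : ℝ) * (f (y (k + 1)) - f xstar) +
        bregman h xstar (z (k + 1)) ≤
      C * ε * (risingFactorial k p : ℝ) * (f (y k) - f xstar) + bregman h xstar (z k) := by
  obtain ⟨n, rfl⟩ : ∃ n, p = n + 1 := ⟨p - 1, by omega⟩
  have hn : n ≠ 0 := by omega
  have hn' : (n : ℝ) ≠ 0 := by exact_mod_cast hn
  simp only [risingFactorial_eq_ascFactorial, Nat.add_sub_cancel] at hz hC' ⊢
  push_cast at hC' hhuc hx hz hy ⊢
  have hq : ((n : ℝ) + 1) / n = 1 + (n : ℝ)⁻¹ := by field_simp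
  have hpq : ((n : ℝ) + 1).HolderConjugate (1 + (n : ℝ)⁻¹) := by
    rw [Real.holderConjugate_iff_eq_conjExponent (by norm_cast), add_sub_cancel_right, hq]
  simp only [add_sub_cancel_right, one_div, hq] at hy
  set R : ℝ := ((k + 1).ascFactorial n : ℝ) with hR
  set τ := ε * C * ((n : ℝ) + 1) * R with hτ
  have hA : C * ε * (k.ascFactorial (n + 1) : ℝ) = C * ε * R * k := by
    rw [Nat.ascFactorial_succ, ← Nat.succ_ascFactorial]; push_cast; ring
  have hA' : C * ε * ((k + 1).ascFactorial (n + 1) : ℝ) = C * ε * R * k + τ := by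
    rw [Nat.ascFactorial_succ]; push_cast; ring
  have hcouple : (C * ε * R * k + τ) • x (k + 1) = τ • z k + (C * ε * R * k) • y k := by
    rw [hx k, smul_add, smul_smul, smul_smul]
    congr 2 <;> field_simp <;> ring
  have hmirror : gradient h (z k) - gradient h (z (k + 1)) = τ • gradient f (y (k + 1)) := by
    rw [hz k, sub_sub_cancel]
  have hRK : R ≤ ((k : ℝ) + n + 1) ^ n := by
    rw [hR]
    exact_mod_cast (Nat.ascFactorial_le_pow_add k n).trans
      (Nat.pow_le_pow_left (Nat.le_succ (k + n)) n)
  have hτL : τ ^ (1 + (n : ℝ)⁻¹) ≤ (C * ε * R * k + τ) * (M * ε ^ (n : ℝ)⁻¹) :=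
    (step_weight_rpow_le hn hε.le hC.le hM.le (by positivity) (by positivity) hC' hRK).trans_eq
      (by rw [hτ]; ring)
  have hd : ‖z k - z (k + 1)‖ ^ ((n : ℝ) + 1) / ((n : ℝ) + 1) ≤ bregman h (z (k + 1)) (z k) := by
    have := hhuc (z k) (z (k + 1))
    rw [norm_sub_rev]
    norm_cast at this ⊢
    rwa [bregman, div_eq_mul_one_div, mul_comm]
  have herr := coupling_error_nonpos hpq (by positivity) (by positivity) hτL (hy (k + 1)) hd
  rw [hA, hA']
  linarith [lyapunov_step_le hfconv xstar (by positivity) (by positivity) hcouple hmirror]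

theorem accelerated_discretization_rate_general
    {E : Type*} [NormedAddCommGroup E] [InnerProductSpace ℝ E] [CompleteSpace E]
    (p : ℕ) (hp : 2 ≤ p) (ε M C : ℝ) (hε : 0 < ε) (hM : 0 < M)
    (hC : 0 < C) (hC' : C ≤ M ^ (p - 1) / (p : ℝ) ^ p)
    (f h : E → ℝ)
    (hfconv : ∀ a b : E, f a + ⟪gradient f a, b - a⟫ ≤ f b)
    (xstar : E)
    (hhuc : ∀ a b : E, (1 / (p : ℝ)) * ‖b - a‖ ^ p ≤
      h b - h a - ⟪gradient h a, b - a⟫)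
    (x y z : ℕ → E) (hz0 : z 0 = x 0)
    (hx : ∀ k : ℕ, x (k + 1) =
      ((p : ℝ) / ((k : ℝ) + (p : ℝ))) • z k + ((k : ℝ) / ((k : ℝ) + (p : ℝ))) • y k)
    (hz : ∀ k : ℕ, gradient h (z (k + 1)) = gradient h (z k)
      - (ε * C * (p : ℝ) * (risingFactorial (k + 1) (p - 1) : ℝ)) • gradient f (y (k + 1)))
    (hy : ∀ k : ℕ, M * ε ^ (1 / ((p : ℝ) - 1)) *
        ‖gradient f (y k)‖ ^ ((p : ℝ) / ((p : ℝ) - 1))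
      ≤ ⟪gradient f (y k), x k - y k⟫) :
    ∀ k : ℕ, 1 ≤ k → f (y k) - f xstar ≤
      (h xstar - h (x 0) - ⟪gradient h (x 0), xstar - x 0⟫) /
        (C * ε * (risingFactorial k p : ℝ)) := by
  have hlyap : Antitone fun k ↦
      C * ε * (risingFactorial k p : ℝ) * (f (y k) - f xstar) + bregman h xstar (z k) :=
    antitone_nat_of_succ_le <| accelerated_lyapunov_succ_le p hp ε M C hε hM hC hC' f h hfconv
      xstar hhuc x y z hx hz hy
  have hrf_zero : risingFactorial 0 p = 0 := by
    rw [risingFactorial_eq_ascFactorial, ← Nat.succ_pred_eq_of_pos (by omega : 0 < p)]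
    exact Nat.zero_ascFactorial _
  intro k hk
  have hbound := hlyap (Nat.zero_le k)
  simp only [hrf_zero, hz0, Nat.cast_zero, mul_zero, zero_mul, zero_add] at hbound
  have hbreg : 0 ≤ bregman h xstar (z k) :=
    (by positivity : (0 : ℝ) ≤ 1 / p * ‖xstar - z k‖ ^ p).trans (hhuc (z k) xstar)
  have hpos : 0 < (risingFactorial k p : ℝ) := by
    obtain ⟨j, rfl⟩ : ∃ j, k = j + 1 := ⟨k - 1, by omega⟩
    rw [risingFactorial_eq_ascFactorial]
    exact_mod_cast Nat.ascFactorial_pos j p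
  rw [le_div_iff₀ (by positivity)]
  change _ ≤ bregman h xstar (x 0)
  linarith

/-- Convergence rate of the rate-matching discretization of the
polynomial Euler–Lagrange equation (Theorem 3 of the paper):
`f (y k) − f x* ≤ D_h(x*, x 0) / (C ε k^{(p)})`. -/
theorem accelerated_discretization_rate
    {E : Type*} [NormedAddCommGroup E] [InnerProductSpace ℝ E] [CompleteSpace E]
    (p : ℕ) (hp : 2 ≤ p) (ε M C : ℝ) (hε : 0 < ε) (hM : 0 < M)
    (hC : 0 < C) (hC' : C ≤ M ^ (p - 1) / (p : ℝ) ^ p)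
    (f h : E → ℝ) (hf : Differentiable ℝ f) (hh : Differentiable ℝ h)
    (hfconv : ∀ a b : E, f a + ⟪gradient f a, b - a⟫ ≤ f b)
    (xstar : E) (hmin : ∀ a, f xstar ≤ f a)
    (hhuc : ∀ a b : E, (1 / (p : ℝ)) * ‖b - a‖ ^ p ≤
      h b - h a - ⟪gradient h a, b - a⟫)
    (x y z : ℕ → E) (hz0 : z 0 = x 0)
    (hx : ∀ k : ℕ, x (k + 1) =
      ((p : ℝ) / ((k : ℝ) + (p : ℝ))) • z k + ((k : ℝ) / ((k : ℝ) + (p : ℝ))) • y k)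
    (hz : ∀ k : ℕ, gradient h (z (k + 1)) = gradient h (z k)
      - (ε * C * (p : ℝ) * (risingFactorial (k + 1) (p - 1) : ℝ)) • gradient f (y (k + 1)))
    (hy : ∀ k : ℕ, M * ε ^ (1 / ((p : ℝ) - 1)) *
        ‖gradient f (y k)‖ ^ ((p : ℝ) / ((p : ℝ) - 1))
      ≤ ⟪gradient f (y k), x k - y k⟫) :
    ∀ k : ℕ, 1 ≤ k → f (y k) - f xstar ≤
      (h xstar - h (x 0) - ⟪gradient h (x 0), xstar - x 0⟫) /
        (C * ε * (risingFactorial k p : ℝ)) :=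
  accelerated_discretization_rate_general p hp ε M C hε hM hC hC' f h hfconv xstar hhuc x y z hz0 hx
    hz hy
end

section
/- Let E be a real inner product space, p ≥ 2 an integer, ε > 0, N > 1. Let g, u ∈ E with r = ‖u‖ > 0, and suppose ‖g + (N r^{p−2} / ε) • u‖ ≤ r^{p−1} / ε. Then ⟨g, −u⟩ ≥ ε ‖g‖² / (2 N r^{p−2}) + (N² − 1) r^p / (2 N ε). -/
open Real
open scoped RealInnerProductSpace

theorem div_le_inner_neg_of_norm_add_smul_le {E : Type*} [NormedAddCommGroup E]
    [InnerProductSpace ℝ E] {g u : E} {c R : ℝ} (hc : 0 < c) (h : ‖g + c • u‖ ≤ R) :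
    (‖g‖ ^ 2 + c ^ 2 * ‖u‖ ^ 2 - R ^ 2) / (2 * c) ≤ ⟪g, -u⟫ := by
  have hsq : ‖g + c • u‖ ^ 2 ≤ R ^ 2 := pow_le_pow_left₀ (norm_nonneg _) h 2
  have hexpand : ‖g + c • u‖ ^ 2 = ‖g‖ ^ 2 + 2 * c * ⟪g, u⟫ + c ^ 2 * ‖u‖ ^ 2 := by
    rw [norm_add_sq_real, inner_smul_right, norm_smul, Real.norm_of_nonneg hc.le]
    ring
  rw [div_le_iff₀ (by positivity), inner_neg_right]
  linarith

/-- The key inequality in the proof of Lemma 2 of the paper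
(with `g = ∇f(y)`, `u = y − x`, `r = ‖u‖`): if
`‖g + (N r^{p−2}/ε) u‖ ≤ r^{p−1}/ε` then
`⟪g, −u⟫ ≥ ε ‖g‖²/(2 N r^{p−2}) + (N²−1) r^p/(2 N ε)`. -/
theorem gradient_update_key_inequality
    {E : Type*} [NormedAddCommGroup E] [InnerProductSpace ℝ E]
    (p : ℕ) (hp : 2 ≤ p) (ε N : ℝ) (hε : 0 < ε) (hN : 1 < N)
    (g u : E) (hu : 0 < ‖u‖)
    (hineq : ‖g + ((N * ‖u‖ ^ (p - 2)) / ε) • u‖ ≤ ‖u‖ ^ (p - 1) / ε) :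
    ε * ‖g‖ ^ 2 / (2 * N * ‖u‖ ^ (p - 2)) + (N ^ 2 - 1) * ‖u‖ ^ p / (2 * N * ε)
      ≤ ⟪g, -u⟫ := by
  obtain ⟨q, rfl⟩ : ∃ q, p = q + 2 := ⟨p - 2, by omega⟩
  simp only [Nat.add_sub_cancel, show q + 2 - 1 = q + 1 from rfl] at hineq ⊢
  have hr : 0 < ‖u‖ ^ q := pow_pos hu q
  have hc : 0 < N * ‖u‖ ^ q / ε := by positivity
  refine le_of_eq_of_le ?_ (div_le_inner_neg_of_norm_add_smul_le hc hineq)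
  field_simp
  ring
end

section
/- Let p ≥ 2 be an integer, ε > 0, A > 0, and let δ : ℕ → ℝ be a sequence with δ_k ≥ 0 for all k which satisfies, for every k ≥ 0, δ_{k+1} ≤ δ_k − ((p−1)/p) * (ε δ_k^p / A)^{1/(p−1)}. Then for all k ≥ 1: δ_k ≤ p^{p−1} A / (ε k^{p−1}). -/
/-!
The energy `e_k = δ_k ^ (-1/(p-1))` grows by at least `c = (ε/A) ^ (1/(p-1)) / p` per step:
the tangent-line bound for the convex function `x ↦ x ^ (-1/(p-1))` at `δ_k` turns the decrease
`δ_k - δ_{k+1}` into an energy gain in which the power of `δ_k` cancels, leaving exactly `c`.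
Hence `e_k ≥ k c`, and raising this to the power `-(p-1)` gives the rate.
-/

open Real

theorem one_add_mul_self_le_rpow_one_add_of_nonpos {s : ℝ} (hs : -1 < s) {p : ℝ} (hp : p ≤ 0) :
    1 + p * s ≤ (1 + s) ^ p := by
  have hu : 0 < 1 + s := by linarith
  have hw : 0 < 1 - p := by linarith
  -- weighted AM-GM for `(1 + s) ^ p` and `1 + s`, whose weighted geometric mean is `1`
  have hamgm := geom_mean_le_arith_mean2_weighted (w₁ := 1 / (1 - p)) (w₂ := -p / (1 - p))
    (by positivity) (div_nonneg (neg_nonneg.2 hp) hw.le) (rpow_nonneg hu.le p) hu.le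
    (by field_simp; ring)
  rw [← rpow_mul hu.le, ← rpow_add hu, show p * (1 / (1 - p)) + -p / (1 - p) = 0 by ring,
    rpow_zero] at hamgm
  field_simp at hamgm
  linarith

theorem rpow_neg_add_le_of_le_sub {p b d y : ℝ} (hp : 1 < p) (hb : 0 ≤ b) (hd : 0 ≤ d)
    (hy : 0 < y) (h : y ≤ d - (p - 1) / p * (b * d ^ p) ^ (1 / (p - 1))) :
    d ^ (-(1 / (p - 1))) + b ^ (1 / (p - 1)) / p ≤ y ^ (-(1 / (p - 1))) := by
  set r := 1 / (p - 1)
  have hr0 : 0 < r := one_div_pos.2 (sub_pos.2 hp)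
  have hrp : r * (p - 1) = 1 := one_div_mul_cancel (sub_pos.2 hp).ne'
  have hd : 0 < d := by
    have : 0 ≤ (p - 1) / p * (b * d ^ p) ^ r := by positivity
    linarith
  have hterm : (b * d ^ p) ^ r = b ^ r * d ^ r * d := by
    rw [mul_rpow hb (by positivity), ← rpow_mul hd.le, show p * r = r + 1 by linear_combination hrp,
      rpow_add hd, rpow_one, mul_assoc]
  have hbern := one_add_mul_self_le_rpow_one_add_of_nonpos (s := y / d - 1)
    (by linarith [div_pos hy hd]) (neg_nonpos.2 hr0.le)
  rw [add_sub_cancel, div_rpow hy.le hd.le] at hbern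
  calc d ^ (-r) + b ^ r / p = d ^ (-r) * (1 + r * ((p - 1) / p * (b * d ^ p) ^ r / d)) := by
        rw [hterm, rpow_neg hd.le]
        field_simp
        linear_combination (-(b ^ r) * d ^ r) * hrp
    _ ≤ d ^ (-r) * (1 + r * ((d - y) / d)) := by gcongr; linarith
    _ = d ^ (-r) * (1 + -r * (y / d - 1)) := by field_simp; ring
    _ ≤ d ^ (-r) * (y ^ (-r) / d ^ (-r)) := by gcongr
    _ = y ^ (-r) := by field_simp

theorem Antitone.natCast_mul_le_rpow_neg {δ : ℕ → ℝ} (hδ : Antitone δ) {r c : ℝ}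
    (hstep : ∀ k, 0 < δ (k + 1) → δ k ^ (-r) + c ≤ δ (k + 1) ^ (-r)) :
    ∀ k, 0 < δ k → k * c ≤ δ k ^ (-r) := by
  intro k
  induction k with
  | zero => intro h; simpa using rpow_nonneg h.le _
  | succ k ih =>
    intro h
    have := ih (h.trans_le (hδ k.le_succ))
    push_cast
    linarith [hstep k h]

theorem le_div_rpow_of_residual_recursion {p b : ℝ} (hp : 1 < p) (hb : 0 < b) {δ : ℕ → ℝ}
    (hδ : ∀ k, 0 ≤ δ k)
    (hrec : ∀ k, δ (k + 1) ≤ δ k - (p - 1) / p * (b * δ k ^ p) ^ (1 / (p - 1)))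
    {k : ℕ} (hk : 0 < k) : δ k ≤ p ^ (p - 1) / (b * k ^ (p - 1)) := by
  have hp1 : 0 < p - 1 := sub_pos.2 hp
  set r := 1 / (p - 1) with hr
  have hr0 : 0 < r := one_div_pos.2 hp1
  have hrp : r * (p - 1) = 1 := one_div_mul_cancel hp1.ne'
  have hanti : Antitone δ := antitone_nat_of_succ_le fun k =>
    (hrec k).trans (sub_le_self _ (by have := hδ k; positivity))
  have henergy := hanti.natCast_mul_le_rpow_neg
    fun k hk => rpow_neg_add_le_of_le_sub hp hb.le (hδ k) hk (hrec k)
  rcases (hδ k).eq_or_lt with h0 | h0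
  · rw [← h0]
    positivity
  have hkc : 0 < k * (b ^ r / p) := by positivity
  calc δ k ≤ (k * (b ^ r / p)) ^ (-r)⁻¹ :=
        (le_rpow_inv_iff_of_neg h0 hkc (neg_neg_of_pos hr0)).2 (henergy k h0)
    _ = p ^ (p - 1) / (b * k ^ (p - 1)) := by
        rw [show (-r)⁻¹ = -(p - 1) by rw [hr]; field_simp, rpow_neg hkc.le,
          mul_rpow (by positivity) (by positivity), div_rpow (by positivity) (by positivity),
          ← rpow_mul hb.le, hrp, rpow_one]
        field_simp

/-- Arithmetic lemma converting the per-step residual decrease of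
the `p`-th order gradient method into an `O(1/(ε k^{p−1}))` convergence rate: if
`δ_k ≥ 0` and `δ_{k+1} ≤ δ_k − ((p−1)/p) (ε δ_k^p / A)^{1/(p−1)}` for all `k`, then
`δ_k ≤ p^{p−1} A / (ε k^{p−1})` for `k ≥ 1`. -/
theorem residual_recursion_rate
    (p : ℕ) (hp : 2 ≤ p) (ε A : ℝ) (hε : 0 < ε) (hA : 0 < A)
    (δ : ℕ → ℝ) (hδ : ∀ k, 0 ≤ δ k)
    (hrec : ∀ k : ℕ, δ (k + 1) ≤
      δ k - (((p : ℝ) - 1) / (p : ℝ)) * (ε * δ k ^ p / A) ^ (1 / ((p : ℝ) - 1))) :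
    ∀ k : ℕ, 1 ≤ k → δ k ≤ (p : ℝ) ^ (p - 1) * A / (ε * (k : ℝ) ^ (p - 1)) := by
  intro k hk
  have hp' : (1 : ℝ) < p := by exact_mod_cast hp
  have hcast : ((p - 1 : ℕ) : ℝ) = (p : ℝ) - 1 := by rw [Nat.cast_sub (by omega), Nat.cast_one]
  have h := le_div_rpow_of_residual_recursion hp' (div_pos hε hA) hδ
    (fun k => by simpa only [rpow_natCast, mul_div_right_comm] using hrec k) hk
  rw [← hcast, rpow_natCast, rpow_natCast] at h
  calc δ k ≤ (p : ℝ) ^ (p - 1) / (ε / A * (k : ℝ) ^ (p - 1)) := h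
    _ = (p : ℝ) ^ (p - 1) * A / (ε * (k : ℝ) ^ (p - 1)) := by field_simp
end

section
/- Let E be a real inner product space, p ≥ 2 an integer, R > 0. Suppose f : E → ℝ is convex and differentiable, x* satisfies f(x*) ≤ f(x) for all x, and every point x of the level set {x : f(x) ≤ f(X 0)} satisfies ‖x − x*‖ ≤ R. Suppose X : ℝ → E satisfies, for every t ≥ 0, that X has derivative v t at t, where v t = −‖∇f(X t)‖^{−(p−2)/(p−1)} • ∇f(X t) if ∇f(X t) ≠ 0 and v t = 0 otherwise (the p-th rescaled gradient flow). Then for every t > 0: f(X t) − f(x*) ≤ (p−1)^{p−1} R^p / t^{p−1}. -/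
open Real
open scoped RealInnerProductSpace

/-- Convergence rate of the `p`-th rescaled gradient flow
(Theorem 5 of the paper): along `Ẋ_t = −∇f(X_t)/‖∇f(X_t)‖^{(p−2)/(p−1)}`,
`f (X t) − f x* ≤ (p−1)^{p−1} R^p / t^{p−1}`. -/
theorem rescaled_gradient_flow_rate
    {E : Type*} [NormedAddCommGroup E] [InnerProductSpace ℝ E] [CompleteSpace E]
    (p : ℕ) (hp : 2 ≤ p) (R : ℝ) (hR : 0 < R)
    (f : E → ℝ) (hf : Differentiable ℝ f)
    (hconv : ∀ a b : E, f a + ⟪gradient f a, b - a⟫ ≤ f b)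
    (xstar : E) (hmin : ∀ a, f xstar ≤ f a)
    (X v : ℝ → E)
    (hlevel : ∀ a : E, f a ≤ f (X 0) → ‖a - xstar‖ ≤ R)
    (hv : ∀ t : ℝ, gradient f (X t) ≠ 0 →
      v t = -(‖gradient f (X t)‖ ^ (-(((p : ℝ) - 2) / ((p : ℝ) - 1)))) • gradient f (X t))
    (hv0 : ∀ t : ℝ, gradient f (X t) = 0 → v t = 0)
    (hX : ∀ t ≥ (0 : ℝ), HasDerivAt X (v t) t) :
    ∀ t : ℝ, 0 < t → f (X t) - f xstar ≤
      ((p : ℝ) - 1) ^ (p - 1) * R ^ p / t ^ (p - 1) := by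
  have h2 : (2:ℝ) ≤ (p:ℝ) := by exact_mod_cast hp
  have hppos : (0:ℝ) < (p:ℝ) - 1 := by linarith
  have hpne : ((p:ℝ) - 1) ≠ 0 := ne_of_gt hppos
  set q : ℝ := (p:ℝ) / ((p:ℝ) - 1) with hq
  have hqpos : 0 < q := div_pos (by linarith) hppos
  set e : ℝ := -(((p : ℝ) - 2) / ((p : ℝ) - 1)) with he
  set g : ℝ → ℝ := fun s => f (X s) - f xstar with hgdef
  have hgnn : ∀ s, 0 ≤ g s := fun s => sub_nonneg.2 (hmin _)
  -- derivative of g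
  have hgd : ∀ s, 0 ≤ s → HasDerivAt g ⟪gradient f (X s), v s⟫ s := by
    intro s hs
    have h1 : HasFDerivAt f (InnerProductSpace.toDual ℝ E (gradient f (X s))) (X s) :=
      ((hf (X s)).hasGradientAt).hasFDerivAt
    have h2' := h1.comp_hasDerivAt s (hX s hs)
    simpa [hgdef, InnerProductSpace.toDual_apply_apply, Function.comp] using
      h2'.sub_const (f xstar)
  -- value of the derivative in the nondegenerate case
  have hval : ∀ s, gradient f (X s) ≠ 0 →
      ⟪gradient f (X s), v s⟫ = -(‖gradient f (X s)‖ ^ q) := by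
    intro s hns
    have hn : (0:ℝ) < ‖gradient f (X s)‖ := norm_pos_iff.2 hns
    rw [hv s hns, real_inner_smul_right, real_inner_self_eq_norm_sq]
    rw [neg_mul, neg_inj, ← Real.rpow_two, ← Real.rpow_add hn]
    congr 1
    rw [he, hq]
    field_simp [hpne]
    ring
  -- derivative is nonpositive
  have hnonpos : ∀ s, ⟪gradient f (X s), v s⟫ ≤ 0 := by
    intro s
    by_cases hns : gradient f (X s) = 0
    · simp [hv0 s hns]
    · rw [hval s hns]
      simp [Real.rpow_nonneg (norm_nonneg _)]
  -- g is antitone on [0, ∞)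
  have hanti : AntitoneOn g (Set.Ici (0:ℝ)) := by
    apply antitoneOn_of_deriv_nonpos (convex_Ici 0)
    · exact fun s hs => ((hgd s hs).continuousAt).continuousWithinAt
    · intro s hs
      rw [interior_Ici] at hs
      exact ((hgd s (le_of_lt hs)).differentiableAt).differentiableWithinAt
    · intro s hs
      rw [interior_Ici] at hs
      rw [(hgd s (le_of_lt hs)).deriv]
      exact hnonpos s
  intro t ht
  by_contra hcon
  push_neg at hcon
  have hC : (0:ℝ) < ((p : ℝ) - 1) ^ (p - 1) * R ^ p / t ^ (p - 1) :=
    div_pos (mul_pos (pow_pos hppos _) (pow_pos hR _)) (pow_pos ht _)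
  have hgt : 0 < g t := lt_trans hC hcon
  -- positivity of g on [0,t]
  have hgpos : ∀ s ∈ Set.Icc (0:ℝ) t, 0 < g s := by
    intro s hs
    exact lt_of_lt_of_le hgt (hanti hs.1 (Set.mem_Ici.2 (le_trans hs.1 hs.2)) hs.2)
  -- gradient nonzero on [0,t]
  have hgradne : ∀ s ∈ Set.Icc (0:ℝ) t, gradient f (X s) ≠ 0 := by
    intro s hs hzero
    have := hconv (X s) xstar
    rw [hzero] at this
    simp at this
    have := hgpos s hs
    simp [hgdef] at this
    linarith
  -- g s ≤ ‖grad‖ * R on [0,t]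
  have hbound : ∀ s ∈ Set.Icc (0:ℝ) t, g s ≤ ‖gradient f (X s)‖ * R := by
    intro s hs
    have h1 : g s ≤ ⟪gradient f (X s), X s - xstar⟫ := by
      have h := hconv (X s) xstar
      have : ⟪gradient f (X s), X s - xstar⟫ = -⟪gradient f (X s), xstar - X s⟫ := by
        rw [← inner_neg_right]; congr 1; abel
      rw [this]
      simp only [hgdef]
      linarith
    have h2 : ⟪gradient f (X s), X s - xstar⟫ ≤ ‖gradient f (X s)‖ * ‖X s - xstar‖ :=
      real_inner_le_norm _ _
    have h3 : ‖X s - xstar‖ ≤ R := by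
      apply hlevel
      have := hanti (Set.mem_Ici.2 le_rfl) (Set.mem_Ici.2 hs.1) hs.1
      simp only [hgdef] at this
      linarith
    calc g s ≤ ‖gradient f (X s)‖ * ‖X s - xstar‖ := le_trans h1 h2
      _ ≤ ‖gradient f (X s)‖ * R := mul_le_mul_of_nonneg_left h3 (norm_nonneg _)
  -- key differential inequality: -g' ≥ (g/R)^q
  have hkey : ∀ s ∈ Set.Icc (0:ℝ) t,
      (g s / R) ^ q ≤ -⟪gradient f (X s), v s⟫ := by
    intro s hs
    rw [hval s (hgradne s hs), neg_neg]
    apply Real.rpow_le_rpow (div_nonneg (hgnn s) hR.le) _ hqpos.le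
    rw [div_le_iff₀ hR]
    exact hbound s hs
  -- set up φ and ψ
  set e' : ℝ := -(((p:ℝ) - 1)⁻¹) with he'
  set φ : ℝ → ℝ := fun s => g s ^ e' with hφ
  set K : ℝ := ((p:ℝ) - 1)⁻¹ * R ^ (-q) with hK
  have hKpos : 0 < K := mul_pos (inv_pos.2 hppos) (Real.rpow_pos_of_pos hR _)
  have hφd : ∀ s ∈ Set.Icc (0:ℝ) t,
      HasDerivAt φ (⟪gradient f (X s), v s⟫ * e' * g s ^ (e' - 1)) s := by
    intro s hs
    exact (hgd s hs.1).rpow_const (Or.inl (ne_of_gt (hgpos s hs)))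
  -- φ' ≥ K on [0,t]
  have hφ' : ∀ s ∈ Set.Icc (0:ℝ) t,
      K ≤ ⟪gradient f (X s), v s⟫ * e' * g s ^ (e' - 1) := by
    intro s hs
    have hgs := hgpos s hs
    have step1 : ⟪gradient f (X s), v s⟫ * e' * g s ^ (e' - 1)
        = ((p:ℝ) - 1)⁻¹ * g s ^ (e' - 1) * (-⟪gradient f (X s), v s⟫) := by
      rw [he']; ring
    rw [step1]
    have step2 : ((p:ℝ) - 1)⁻¹ * g s ^ (e' - 1) * ((g s / R) ^ q)
        ≤ ((p:ℝ) - 1)⁻¹ * g s ^ (e' - 1) * (-⟪gradient f (X s), v s⟫) := by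
      apply mul_le_mul_of_nonneg_left (hkey s hs)
      exact mul_nonneg (inv_nonneg.2 hppos.le) (Real.rpow_nonneg (hgnn s) _)
    have heq : ((p:ℝ) - 1)⁻¹ * g s ^ (e' - 1) * ((g s / R) ^ q) = K := by
      rw [Real.div_rpow (hgnn s) hR.le, div_eq_mul_inv, ← Real.rpow_neg hR.le]
      have hg1 : g s ^ (e' - 1) * g s ^ q = 1 := by
        rw [← Real.rpow_add hgs]
        rw [show e' - 1 + q = 0 by rw [he', hq]; field_simp [hpne]; ring]
        exact Real.rpow_zero _
      calc ((p:ℝ) - 1)⁻¹ * g s ^ (e' - 1) * (g s ^ q * R ^ (-q))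
          = ((p:ℝ) - 1)⁻¹ * (g s ^ (e' - 1) * g s ^ q) * R ^ (-q) := by ring
        _ = K := by rw [hg1, hK]; ring
    rw [← heq]
    exact step2
  -- ψ := K * s - φ s is antitone on [0,t]
  have hψd : ∀ s ∈ Set.Icc (0:ℝ) t, HasDerivAt (fun u => K * u - φ u)
      (K - ⟪gradient f (X s), v s⟫ * e' * g s ^ (e' - 1)) s := by
    intro s hs
    have h1 : HasDerivAt (fun u : ℝ => K * u) K s := by
      simpa using (hasDerivAt_id s).const_mul K
    exact h1.sub (hφd s hs)
  have hψanti : AntitoneOn (fun u => K * u - φ u) (Set.Icc 0 t) := by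
    apply antitoneOn_of_deriv_nonpos (convex_Icc 0 t)
    · exact fun s hs => ((hψd s hs).continuousAt).continuousWithinAt
    · intro s hs
      rw [interior_Icc] at hs
      exact ((hψd s (Set.Ioo_subset_Icc_self hs)).differentiableAt).differentiableWithinAt
    · intro s hs
      rw [interior_Icc] at hs
      rw [(hψd s (Set.Ioo_subset_Icc_self hs)).deriv]
      exact sub_nonpos.2 (hφ' s (Set.Ioo_subset_Icc_self hs))
  have hψ := hψanti (Set.mem_Icc.2 ⟨le_rfl, ht.le⟩) (Set.mem_Icc.2 ⟨ht.le, le_rfl⟩) ht.le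
  have hφ0 : 0 ≤ φ 0 := Real.rpow_nonneg (hgnn 0) _
  have hKt : K * t ≤ φ t := by
    simp only [mul_zero] at hψ
    linarith
  have hKtpos : 0 < K * t := mul_pos hKpos ht
  have hn : ((p - 1 : ℕ) : ℝ) = (p:ℝ) - 1 := by
    have : 1 ≤ p := by omega
    push_cast [Nat.cast_sub this]
    ring
  have hpow : (K * t) ^ (p - 1) ≤ φ t ^ (p - 1) :=
    pow_le_pow_left₀ hKtpos.le hKt _
  have hφt : φ t ^ (p - 1) = (g t)⁻¹ := by
    rw [hφ]
    rw [← Real.rpow_natCast (g t ^ e') (p - 1), ← Real.rpow_mul (hgnn t), hn]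
    rw [show e' * ((p:ℝ) - 1) = -1 by rw [he']; field_simp [hpne]]
    exact Real.rpow_neg_one _
  have hgle : g t ≤ ((K * t) ^ (p - 1))⁻¹ := by
    rw [hφt] at hpow
    have h1 : ((g t)⁻¹)⁻¹ ≤ ((K * t) ^ (p - 1))⁻¹ :=
      inv_anti₀ (pow_pos hKtpos _) hpow
    rwa [inv_inv] at h1
  have hRq : (R ^ (-q)) ^ (p - 1) = (R ^ p)⁻¹ := by
    rw [← Real.rpow_natCast (R ^ (-q)) (p - 1), ← Real.rpow_mul hR.le, hn]
    rw [show -q * ((p:ℝ) - 1) = -(p:ℝ) by rw [hq]; field_simp [hpne]]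
    rw [Real.rpow_neg hR.le, Real.rpow_natCast]
  have hfinal : ((K * t) ^ (p - 1))⁻¹ = ((p:ℝ) - 1) ^ (p - 1) * R ^ p / t ^ (p - 1) := by
    rw [mul_pow, hK, mul_pow, hRq, inv_pow]
    field_simp
  rw [hfinal] at hgle
  linarith
end

section
/- Let E be a real inner product space, p ≥ 2 an integer, ε > 0, σ > 0, and set κ = ε σ. Suppose f : E → ℝ is differentiable and σ-uniformly convex of order p, and x* satisfies f(x*) ≤ f(x) for all x. Let m be a positive integer with m ≥ 8p / κ^{1/p}, and let u, v ∈ E satisfy f(u) − f(x*) ≤ 2^{3p−2} p^{p−1} ‖v − x*‖^p / (ε m^p) (the guarantee of running m iterations of the accelerated p-th order method started at v). Then ‖u − x*‖^p ≤ e^{−1} ‖v − x*‖^p; i.e., each restart cycle of length m contracts the distance to the optimum by at least a factor 1/e. -/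
open Real
open scoped RealInnerProductSpace

/-- One restart cycle of the accelerated `p`-th order method
contracts the distance to the optimum by a factor `1/e` (inequality (49) in the proof
of Theorem 10 of the paper): if `f` is `σ`-uniformly convex of order `p`, `κ = εσ`,
`m ≥ 8p/κ^{1/p}`, and `f(u) − f(x*) ≤ 2^{3p−2} p^{p−1} ‖v − x*‖^p/(ε m^p)`, then
`‖u − x*‖^p ≤ e^{−1} ‖v − x*‖^p`. -/
theorem restart_cycle_contraction
    {E : Type*} [NormedAddCommGroup E] [InnerProductSpace ℝ E] [CompleteSpace E]
    (p : ℕ) (hp : 2 ≤ p) (ε σ : ℝ) (hε : 0 < ε) (hσ : 0 < σ)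
    (f : E → ℝ) (hf : Differentiable ℝ f)
    (hucf : ∀ a b : E,
      f a + ⟪gradient f a, b - a⟫ + (σ / (p : ℝ)) * ‖b - a‖ ^ p ≤ f b)
    (xstar : E) (hmin : ∀ a, f xstar ≤ f a)
    (m : ℕ) (hm : 0 < m)
    (hm' : 8 * (p : ℝ) / (ε * σ) ^ (1 / (p : ℝ)) ≤ (m : ℝ))
    (u v : E)
    (huv : f u - f xstar ≤
      (2 : ℝ) ^ (3 * p - 2) * (p : ℝ) ^ (p - 1) * ‖v - xstar‖ ^ p / (ε * (m : ℝ) ^ p)) :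
    ‖u - xstar‖ ^ p ≤ Real.exp (-1) * ‖v - xstar‖ ^ p := by
  have hp0 : (0:ℝ) < p := by positivity
  -- gradient zero at minimizer
  have hloc : IsLocalMin f xstar := Filter.Eventually.of_forall hmin
  have hfd : fderiv ℝ f xstar = 0 := hloc.fderiv_eq_zero
  have hgrad : gradient f xstar = 0 := by
    simp [gradient, hfd]
  have hA : σ / p * ‖u - xstar‖ ^ p ≤ f u - f xstar := by
    have := hucf xstar u
    rw [hgrad] at this
    simp at this
    linarith
  -- m^p bound
  have hκ : (0:ℝ) < ε * σ := mul_pos hε hσ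
  have hκp : (0:ℝ) < (ε*σ) ^ (1/(p:ℝ)) := rpow_pos_of_pos hκ _
  have hb : (0:ℝ) ≤ 8 * p / (ε*σ) ^ (1/(p:ℝ)) := by positivity
  have hmp : (8*(p:ℝ))^p / (ε*σ) ≤ (m:ℝ)^p := by
    have h := pow_le_pow_left₀ hb hm' p
    rwa [div_pow, show ((ε*σ) ^ (1/(p:ℝ)))^p = ε*σ by
      rw [← Real.rpow_natCast ((ε*σ) ^ (1/(p:ℝ))) p, ← Real.rpow_mul hκ.le]
      rw [one_div, inv_mul_cancel₀ (by positivity : (p:ℝ) ≠ 0), Real.rpow_one]] at h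
  have hK : (0:ℝ) ≤ ‖v - xstar‖ ^ p := by positivity
  have hmpow : (0:ℝ) < (m:ℝ)^p := by positivity
  -- key scalar identity: (8p)^p = 4 * 2^(3p-2) * p^(p-1) * p
  have hid : (8*(p:ℝ))^p = 4 * 2^(3*p-2) * (p:ℝ)^(p-1) * p := by
    have e1 : (2:ℝ)^(3*p-2) * 4 = 2^(3*p) := by
      rw [show 3*p = (3*p-2)+2 from by omega, pow_add]; norm_num
    rw [mul_pow, show (8:ℝ)^p = 2^(3*p) from by rw [pow_mul]; norm_num, ← e1,
      show (p:ℝ)^p = (p:ℝ)^(p-1) * (p:ℝ)^1 from by rw [← pow_add]; congr 1; omega]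
    ring
  -- coefficient bound
  have hcoef : (2:ℝ)^(3*p-2) * (p:ℝ)^(p-1) * ‖v - xstar‖^p / (ε * (m:ℝ)^p)
      ≤ σ / p * ((1/4) * ‖v - xstar‖^p) := by
    rw [div_le_iff₀ (by positivity)]
    have h1 : (8*(p:ℝ))^p ≤ ε * σ * (m:ℝ)^p := (div_le_iff₀ hκ).mp hmp |>.trans_eq (by ring)
    calc (2:ℝ)^(3*p-2) * (p:ℝ)^(p-1) * ‖v - xstar‖^p
        = ‖v - xstar‖^p/(4*p) * ((8*(p:ℝ))^p) := by rw [hid]; field_simp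
      _ ≤ ‖v - xstar‖^p/(4*p) * (ε*σ*(m:ℝ)^p) :=
          mul_le_mul_of_nonneg_left h1 (by positivity)
      _ = σ / p * ((1/4) * ‖v - xstar‖^p) * (ε * (m:ℝ)^p) := by field_simp
  have hexp : (1:ℝ)/4 ≤ Real.exp (-1) := by
    have h4 : Real.exp 1 ≤ 4 := le_of_lt (lt_trans Real.exp_one_lt_d9 (by norm_num))
    calc (1:ℝ)/4 ≤ 1/Real.exp 1 := one_div_le_one_div_of_le (Real.exp_pos 1) h4
      _ = Real.exp (-1) := by rw [Real.exp_neg, one_div]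
  have hfin : σ / p * ‖u - xstar‖ ^ p ≤ σ / p * (Real.exp (-1) * ‖v - xstar‖ ^ p) := by
    calc σ / p * ‖u - xstar‖ ^ p ≤ f u - f xstar := hA
      _ ≤ _ := huv
      _ ≤ σ / p * ((1/4) * ‖v - xstar‖^p) := hcoef
      _ ≤ _ := by
          apply mul_le_mul_of_nonneg_left _ (by positivity)
          exact mul_le_mul_of_nonneg_right hexp hK
  exact le_of_mul_le_mul_left hfin (by positivity)
end

section
/- Let E be a real inner product space and h : E → ℝ differentiable with ∇h injective. Let α, γ : ℝ → ℝ with γ satisfying, for every t, that γ has derivative exp(α t) at t (the ideal scaling condition). Suppose X, V : ℝ → E satisfy, for every t, that X has derivative V t at t and that the map t ↦ ∇h(X t + exp(−α t) • V t) is constant. Then there exist a, b ∈ E such that X t = exp(−γ t) • a + b for all t. (The natural motion of the Bregman Lagrangian is independent of h.) -/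
open Real

/-! The Euler–Lagrange equation says that `X t + e^{-α t} • Ẋ t` is a constant `c`, i.e.
`Ẋ = γ̇ • (c - X)` under the ideal scaling; this linear equation is solved by the integrating
factor `e^{γ}`, since `e^{γ t} • (X t - c)` has zero derivative. -/

section LinearRelaxation

variable {E : Type*} [NormedAddCommGroup E] [NormedSpace ℝ E]

theorem hasDerivAt_exp_smul_sub_eq_zero {g g' : ℝ → ℝ} {X : ℝ → E} {c : E} {t : ℝ}
    (hg : HasDerivAt g (g' t) t) (hX : HasDerivAt X (g' t • (c - X t)) t) :
    HasDerivAt (fun s => exp (g s) • (X s - c)) 0 t :=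
  (hg.exp.smul (hX.sub_const c)).congr_deriv (by module)

theorem eq_exp_neg_smul_add_of_hasDerivAt_smul_sub {g g' : ℝ → ℝ} {X : ℝ → E} (c : E)
    (hg : ∀ t, HasDerivAt g (g' t) t) (hX : ∀ t, HasDerivAt X (g' t • (c - X t)) t) (t : ℝ) :
    X t = exp (-(g t)) • (exp (g 0) • (X 0 - c)) + c := by
  have hderiv t := hasDerivAt_exp_smul_sub_eq_zero (hg t) (hX t)
  have hconst : exp (g t) • (X t - c) = exp (g 0) • (X 0 - c) :=
    is_const_of_deriv_eq_zero (fun s => (hderiv s).differentiableAt) (fun s => (hderiv s).deriv) t 0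
  rw [← hconst, smul_smul, ← exp_add, neg_add_cancel, exp_zero, one_smul, sub_add_cancel]

end LinearRelaxation

theorem bregman_lagrangian_natural_motion_general
    {E : Type*} [NormedAddCommGroup E] [InnerProductSpace ℝ E] [CompleteSpace E]
    (h : E → ℝ) (hinj : Function.Injective (gradient h))
    (α γ : ℝ → ℝ) (hγ : ∀ t, HasDerivAt γ (Real.exp (α t)) t)
    (X V : ℝ → E) (hX : ∀ t, HasDerivAt X (V t) t)
    (hconst : ∀ s t : ℝ,
      gradient h (X s + Real.exp (-(α s)) • V s) =
      gradient h (X t + Real.exp (-(α t)) • V t)) :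
    ∃ a b : E, ∀ t : ℝ, X t = Real.exp (-(γ t)) • a + b := by
  set c := X 0 + exp (-(α 0)) • V 0
  have hV t : V t = exp (α t) • (c - X t) := by
    have hc : X t + exp (-(α t)) • V t = c := hinj (hconst t 0)
    rw [← hc, add_sub_cancel_left, smul_smul, ← exp_add, add_neg_cancel,
      exp_zero, one_smul]
  exact ⟨_, c, eq_exp_neg_smul_add_of_hasDerivAt_smul_sub c hγ fun t => hV t ▸ hX t⟩

/-- The natural motion of the Bregman Lagrangian (Appendix B.6 of
the paper): under the ideal scaling `γ̇_t = e^{α_t}`, if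
`∇h(X_t + e^{−α_t} Ẋ_t)` is constant in `t` (the Euler–Lagrange equation with zero
potential) and `∇h` is injective, then `X_t = e^{−γ_t} a + b` for some `a, b`. -/
theorem bregman_lagrangian_natural_motion
    {E : Type*} [NormedAddCommGroup E] [InnerProductSpace ℝ E] [CompleteSpace E]
    (h : E → ℝ) (hh : Differentiable ℝ h) (hinj : Function.Injective (gradient h))
    (α γ : ℝ → ℝ) (hγ : ∀ t, HasDerivAt γ (Real.exp (α t)) t)
    (X V : ℝ → E) (hX : ∀ t, HasDerivAt X (V t) t)
    (hconst : ∀ s t : ℝ,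
      gradient h (X s + Real.exp (-(α s)) • V s) =
      gradient h (X t + Real.exp (-(α t)) • V t)) :
    ∃ a b : E, ∀ t : ℝ, X t = Real.exp (-(γ t)) • a + b :=
  bregman_lagrangian_natural_motion_general h hinj α γ hγ X V hX hconst
end
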